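/- If f : ℝⁿ × ℝⁿ → ℝⁿ is globally Lipschitz (with constant L) and g : [-r,0] → ℝⁿ is continuous with r > 0, then any two solutions X, Y : [-r, T] → ℝⁿ of the delay differential equation ẋ(t) = f(x(t), x(t−r)) on [0,T] with X(t) = Y(t) = g(t) for all t ∈ [-r,0] coincide on all of [-r,T]. -/
import Mathlib

open Set Filter Real
open scoped Topology NNReal

/-- Uniqueness of solutions of the delay differential equation
`ẋ(t) = f(x(t), x(t−r))` with a common continuous initial condition `g` on `[-r,0]`:
two solutions on `[-r,T]` coincide. -/
theorem dde_uniqueness (n : ℕ) (r T L : ℝ) (hr : 0 < r) (hT : 0 < T)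
    (f : EuclideanSpace ℝ (Fin n) × EuclideanSpace ℝ (Fin n) → EuclideanSpace ℝ (Fin n))
    (hf : ∀ p q, ‖f p - f q‖ ≤ L * ‖p - q‖)
    (g X Y : ℝ → EuclideanSpace ℝ (Fin n))
    (hg : ContinuousOn g (Set.Icc (-r) 0))
    (hX0 : ∀ t ∈ Set.Icc (-r) (0:ℝ), X t = g t)
    (hY0 : ∀ t ∈ Set.Icc (-r) (0:ℝ), Y t = g t)
    (hXc : ContinuousOn X (Set.Icc (-r) T))
    (hYc : ContinuousOn Y (Set.Icc (-r) T))
    (hX : ∀ t ∈ Set.Ioo (0:ℝ) T, HasDerivAt X (f (X t, X (t - r))) t)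
    (hY : ∀ t ∈ Set.Ioo (0:ℝ) T, HasDerivAt Y (f (Y t, Y (t - r))) t) :
    ∀ t ∈ Set.Icc (-r) T, X t = Y t := by
  set K : ℝ≥0 := Real.toNNReal L with hK
  -- Lipschitz in the first coordinate
  have hv : ∀ c : EuclideanSpace ℝ (Fin n),
      LipschitzWith K (fun x => f (x, c)) := by
    intro c
    apply LipschitzWith.of_dist_le_mul
    intro x y
    rw [dist_eq_norm, dist_eq_norm]
    calc ‖f (x, c) - f (y, c)‖ ≤ L * ‖((x, c) : _ × _) - (y, c)‖ := hf _ _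
      _ ≤ K * ‖((x, c) : _ × _) - (y, c)‖ := by
          apply mul_le_mul_of_nonneg_right (Real.le_coe_toNNReal L) (norm_nonneg _)
      _ = K * ‖x - y‖ := by
          congr 1
          simp [Prod.norm_def, Prod.sub_def]
  -- the key step lemma
  have key : ∀ a b : ℝ, 0 ≤ a → a < b → b ≤ T → b ≤ a + r →
      (∀ s ∈ Icc (-r) a, X s = Y s) → ∀ t ∈ Icc (-r) b, X t = Y t := by
    intro a b ha hab hbT hbar hyp t ht
    rcases le_or_gt t a with h | h
    · exact hyp t ⟨ht.1, h⟩
    -- a < t ≤ b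
    have htT : t ≤ T := le_trans ht.2 hbT
    have hbound : ∀ ε ∈ Ioo a t,
        dist (X t) (Y t) ≤ dist (X ε) (Y ε) * Real.exp (K * T) := by
      intro ε hε
      have hεt : ε ≤ t := le_of_lt hε.2
      have hder : ∀ s ∈ Ico ε t, s ∈ Ioo (0:ℝ) T := by
        intro s hs
        exact ⟨lt_of_lt_of_le (lt_of_le_of_lt ha hε.1) hs.1,
          lt_of_lt_of_le hs.2 htT⟩
      have hsub : Icc ε t ⊆ Icc (-r) T := by
        apply Icc_subset_Icc _ htT
        linarith [hε.1, hr, ha]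
      have hdelay : ∀ s ∈ Ico ε t, Y (s - r) = X (s - r) := by
        intro s hs
        refine (hyp (s - r) ⟨?_, ?_⟩).symm
        · have := (hder s hs).1; linarith
        · have : s < b := lt_of_lt_of_le hs.2 ht.2
          linarith
      have := dist_le_of_trajectories_ODE (v := fun s x => f (x, X (s - r)))
        (K := K) (f := X) (g := Y) (a := ε) (b := t) (δ := dist (X ε) (Y ε))
        (fun s => hv (X (s - r)))
        (hXc.mono hsub)
        (fun s hs => (hX s (hder s hs)).hasDerivWithinAt)
        (hYc.mono hsub)
        (fun s hs => by
          have h1 := (hY s (hder s hs)).hasDerivWithinAt (s := Ici s)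
          rwa [hdelay s hs] at h1)
        le_rfl t ⟨hεt, le_rfl⟩
      refine le_trans this ?_
      apply mul_le_mul_of_nonneg_left _ dist_nonneg
      apply Real.exp_le_exp.mpr
      apply mul_le_mul_of_nonneg_left _ (K.coe_nonneg)
      have h0ε : 0 ≤ ε := le_trans ha (le_of_lt hε.1)
      linarith
    -- take the limit ε → a⁺
    have hmem : a ∈ Icc (-r) T := ⟨by linarith, by linarith⟩
    have hXa : ContinuousWithinAt X (Ioo a t) a :=
      (hXc.continuousWithinAt hmem).mono (fun s hs => ⟨by linarith [hs.1], by linarith [hs.2]⟩)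
    have hYa : ContinuousWithinAt Y (Ioo a t) a :=
      (hYc.continuousWithinAt hmem).mono (fun s hs => ⟨by linarith [hs.1], by linarith [hs.2]⟩)
    have htend : Tendsto (fun ε => dist (X ε) (Y ε) * Real.exp (K * T))
        (𝓝[Ioo a t] a) (𝓝 (dist (X a) (Y a) * Real.exp (K * T))) :=
      ((hXa.dist hYa).mul tendsto_const_nhds)
    have hXYa : X a = Y a := hyp a ⟨by linarith, le_rfl⟩
    rw [hXYa, dist_self, zero_mul] at htend
    have hne : (𝓝[Ioo a t] a).NeBot := by
      rw [nhdsWithin_Ioo_eq_nhdsGT h]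
      infer_instance
    have : dist (X t) (Y t) ≤ 0 :=
      ge_of_tendsto htend (eventually_nhdsWithin_of_forall hbound)
    have : dist (X t) (Y t) = 0 := le_antisymm this dist_nonneg
    exact dist_eq_zero.mp this
  -- induction on steps of length r
  have main : ∀ k : ℕ, ∀ t ∈ Icc (-r) (min (k * r) T), X t = Y t := by
    intro k
    induction k with
    | zero =>
        intro t ht
        simp only [Nat.cast_zero, zero_mul, min_eq_left (le_of_lt hT)] at ht
        rw [hX0 t ht, hY0 t ht]
    | succ k ih =>
        rcases le_or_gt T ((k : ℝ) * r) with hkT | hkT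
        · intro t ht
          apply ih t
          have h2 : T ≤ ((k + 1 : ℕ) : ℝ) * r := by push_cast; nlinarith
          rw [min_eq_right hkT]
          rwa [min_eq_right h2] at ht
        · have ha : min ((k : ℝ) * r) T = (k : ℝ) * r := min_eq_left (le_of_lt hkT)
          apply key ((k : ℝ) * r) (min (((k : ℕ) + 1 : ℕ) * r) T)
            (by positivity)
            (by
              apply lt_min _ hkT
              push_cast; nlinarith)
            (min_le_right _ _)
            (by
              refine le_trans (min_le_left _ _) ?_
              push_cast; nlinarith)
            (fun s hs => ih s (by rwa [ha]))
  -- conclude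
  intro t ht
  obtain ⟨k, hk⟩ := exists_nat_ge (T / r)
  have hkr : T ≤ (k : ℝ) * r := by
    rw [div_le_iff₀ hr] at hk
    linarith
  exact main k t (by rwa [min_eq_right hkr])
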